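/- arXiv:math/0702408 — 4 statements merged into one kernel-verified Lean document; each statement's English description precedes it below -/
import Mathlib

section
/- Let A be a *-algebra of bounded operators on a Hilbert space H, D a selfadjoint operator with compact resolvent, and K a bounded invertible operator with bounded inverse such that K maps dom D into itself and da := K⁻¹(Da − (K⁻¹aK)D) is bounded for all a in A. Then D'' := KD satisfies: [D'', a] = K² · (da) is bounded for every a in A, so (A, H, D'') is an ordinary spectral triple. -/
/-!
Since `K K K⁻¹ = K`, multiplying the twisted one-form `da = K⁻¹(Da − (K⁻¹aK)D)` by `K²` gives
`KDa − aKD = [KD, a]`; composing a bounded map with the bounded operator `K²` keeps it bounded.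
-/

def twistedOneForm {R M : Type*} [Ring R] [AddCommGroup M] [Module R M] (K : M ≃ₗ[R] M)
    (D a : M →ₗ[R] M) : M →ₗ[R] M :=
  K.symm.toLinearMap ∘ₗ (D ∘ₗ a - (K.symm.toLinearMap ∘ₗ a ∘ₗ K.toLinearMap) ∘ₗ D)

theorem commutator_comp_eq_sq_comp_twistedOneForm {R M : Type*} [Ring R] [AddCommGroup M]
    [Module R M] (K : M ≃ₗ[R] M) (D a : M →ₗ[R] M) :
    (K.toLinearMap ∘ₗ D) ∘ₗ a - a ∘ₗ (K.toLinearMap ∘ₗ D)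
      = K.toLinearMap ∘ₗ K.toLinearMap ∘ₗ twistedOneForm K D a := by
  ext v
  simp [twistedOneForm]

theorem ContinuousLinearMap.exists_bound_comp {𝕜 E F G : Type*} [NontriviallyNormedField 𝕜]
    [SeminormedAddCommGroup E] [SeminormedAddCommGroup F] [SeminormedAddCommGroup G]
    [NormedSpace 𝕜 E] [NormedSpace 𝕜 F] [NormedSpace 𝕜 G] (T : E →L[𝕜] F) (f : G →ₗ[𝕜] E)
    (hf : ∃ C : ℝ, ∀ v, ‖f v‖ ≤ C * ‖v‖) : ∃ C : ℝ, ∀ v, ‖T (f v)‖ ≤ C * ‖v‖ :=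
  ⟨‖T.comp (f.mkContinuousOfExistsBound hf)‖, (T.comp (f.mkContinuousOfExistsBound hf)).le_opNorm⟩

theorem stmt0_general
    (H : Type*) [NormedAddCommGroup H] [InnerProductSpace ℂ H]
    (A : Set (H →L[ℂ] H))
    (D : H →ₗ[ℂ] H)
    (K : H ≃L[ℂ] H)
    (da : ∀ a ∈ A, H →ₗ[ℂ] H)
    (hda : ∀ a (ha : a ∈ A), (da a ha : H →ₗ[ℂ] H)
      = (K.symm : H →ₗ[ℂ] H) ∘ₗ
        (D ∘ₗ (a : H →ₗ[ℂ] H)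
          - ((K.symm : H →ₗ[ℂ] H) ∘ₗ (a : H →ₗ[ℂ] H) ∘ₗ (K : H →ₗ[ℂ] H)) ∘ₗ D))
    (hbdd : ∀ a (ha : a ∈ A), ∃ C : ℝ, ∀ v : H, ‖da a ha v‖ ≤ C * ‖v‖) :
    ∀ a (ha : a ∈ A),
      ((K : H →ₗ[ℂ] H) ∘ₗ D) ∘ₗ (a : H →ₗ[ℂ] H)
          - (a : H →ₗ[ℂ] H) ∘ₗ ((K : H →ₗ[ℂ] H) ∘ₗ D)
        = (K : H →ₗ[ℂ] H) ∘ₗ (K : H →ₗ[ℂ] H) ∘ₗ (da a ha : H →ₗ[ℂ] H)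
      ∧ ∃ C : ℝ, ∀ v : H,
          ‖(((K : H →ₗ[ℂ] H) ∘ₗ D) ∘ₗ (a : H →ₗ[ℂ] H)
            - (a : H →ₗ[ℂ] H) ∘ₗ ((K : H →ₗ[ℂ] H) ∘ₗ D)) v‖ ≤ C * ‖v‖ := by
  intro a ha
  have hcomm := commutator_comp_eq_sq_comp_twistedOneForm K.toLinearEquiv D a
  rw [show twistedOneForm K.toLinearEquiv D a = da a ha from (hda a ha).symm] at hcomm
  refine ⟨hcomm, ?_⟩
  rw [hcomm]
  exact ((K : H →L[ℂ] H).comp (K : H →L[ℂ] H)).exists_bound_comp _ (hbdd a ha)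

/-- For a twisted spectral triple `(A, H, D, K)` with `K` bounded and
boundedly invertible (modeled as a continuous linear equivalence), mapping `dom D` into
itself (here `D` is modeled as a linear map), if for `a ∈ A` the twisted one-form
`da := K⁻¹ ∘ (D ∘ a − (K⁻¹ ∘ a ∘ K) ∘ D)` is bounded, then `D'' := K ∘ D` satisfies
`[D'', a] = K² ∘ da`, which is bounded; so `(A, H, D'')` is an ordinary spectral triple. -/
theorem stmt0
    (H : Type*) [NormedAddCommGroup H] [InnerProductSpace ℂ H] [CompleteSpace H]
    (A : Set (H →L[ℂ] H)) (hA : ∀ a ∈ A, ContinuousLinearMap.adjoint a ∈ A)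
    (D : H →ₗ[ℂ] H) (hD : ∀ v w : H, (inner ℂ (D v) w : ℂ) = inner ℂ v (D w))
    (K : H ≃L[ℂ] H)
    (da : ∀ a ∈ A, H →ₗ[ℂ] H)
    (hda : ∀ a (ha : a ∈ A), (da a ha : H →ₗ[ℂ] H)
      = (K.symm : H →ₗ[ℂ] H) ∘ₗ
        (D ∘ₗ (a : H →ₗ[ℂ] H)
          - ((K.symm : H →ₗ[ℂ] H) ∘ₗ (a : H →ₗ[ℂ] H) ∘ₗ (K : H →ₗ[ℂ] H)) ∘ₗ D))
    (hbdd : ∀ a (ha : a ∈ A), ∃ C : ℝ, ∀ v : H, ‖da a ha v‖ ≤ C * ‖v‖) :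
    ∀ a (ha : a ∈ A),
      ((K : H →ₗ[ℂ] H) ∘ₗ D) ∘ₗ (a : H →ₗ[ℂ] H)
          - (a : H →ₗ[ℂ] H) ∘ₗ ((K : H →ₗ[ℂ] H) ∘ₗ D)
        = (K : H →ₗ[ℂ] H) ∘ₗ (K : H →ₗ[ℂ] H) ∘ₗ (da a ha : H →ₗ[ℂ] H)
      ∧ ∃ C : ℝ, ∀ v : H,
          ‖(((K : H →ₗ[ℂ] H) ∘ₗ D) ∘ₗ (a : H →ₗ[ℂ] H)
            - (a : H →ₗ[ℂ] H) ∘ₗ ((K : H →ₗ[ℂ] H) ∘ₗ D)) v‖ ≤ C * ‖v‖ :=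
  stmt0_general H A D K da hda hbdd
end

section
/- In A(S⁷_q), the 4×2 matrix Ψ with rows (−qz₃*, z₁*), (z₁, z₃), (qz₂, qz₄), (−q³z₄*, q²z₂*) satisfies Ψ†Ψ = 1 (the 2×2 identity), and consequently P := ΨΨ† satisfies P = P* = P². -/
/-!
The two columns of `Ψ` are orthonormal: each of the four entries of `Ψ†Ψ` reduces to a
defining relation of `A(S⁷_q)` after moving scalars out. The sphere relations together with the
commutators `[z₃*, z₃]`, `[z₂*, z₂]`, `[z₄*, z₄]` give the diagonal entries, and the
`q`-commutation relations for `z₁z₃*` and `z₂z₄*` give the off-diagonal ones.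
Once `Ψ†Ψ = 1`, the matrix `ΨΨ†` is automatically a self-adjoint idempotent.
-/

open Matrix

theorem Matrix.isStarProjection_mul_conjTranspose_of_conjTranspose_mul_self_eq_one
    {m n R : Type*} [Fintype m] [Fintype n] [DecidableEq n] [Semiring R] [StarRing R]
    {Ψ : Matrix m n R} (h : Ψᴴ * Ψ = 1) : IsStarProjection (Ψ * Ψᴴ) where
  isIdempotentElem := by
    rw [IsIdempotentElem, Matrix.mul_assoc, ← Matrix.mul_assoc Ψᴴ, h, Matrix.one_mul]
  isSelfAdjoint := by
    rw [IsSelfAdjoint, star_eq_conjTranspose, conjTranspose_mul, conjTranspose_conjTranspose]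

section QuantumSphere

variable {R : Type*} [Ring R] [StarRing R] [Algebra ℝ R] {q : ℝ} {z₁ z₂ z₃ z₄ : R}

abbrev psi (q : ℝ) (z₁ z₂ z₃ z₄ : R) : Matrix (Fin 4) (Fin 2) R :=
  !![-(q • star z₃), star z₁;
     z₁, z₃;
     q • z₂, q • z₄;
     -((q ^ 3) • star z₄), (q ^ 2) • star z₂]

theorem psi_col_zero_unit
    (h44 : star z₄ * z₄ = z₄ * star z₄)
    (h22 : star z₂ * z₂ - z₂ * star z₂ = (1 - q ^ 2) • (z₄ * star z₄))
    (h33 : star z₃ * z₃ - z₃ * star z₃ = star z₂ * z₂ - (q ^ 4) • (z₂ * star z₂))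
    (hsph₂ : star z₁ * z₁ + (q ^ 6) • (star z₂ * z₂) + (q ^ 2) • (star z₃ * z₃)
        + (q ^ 8) • (star z₄ * z₄) = 1) :
    q ^ 2 • (z₃ * star z₃) + star z₁ * z₁ + q ^ 2 • (star z₂ * z₂)
      + q ^ 6 • (z₄ * star z₄) = 1 := by
  linear_combination (norm := module) hsph₂ - q ^ 2 • h33 - q ^ 6 • h22 - q ^ 8 • h44

theorem psi_col_one_unit
    (h44 : star z₄ * z₄ = z₄ * star z₄)
    (h22 : star z₂ * z₂ - z₂ * star z₂ = (1 - q ^ 2) • (z₄ * star z₄))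
    (h33 : star z₃ * z₃ - z₃ * star z₃ = star z₂ * z₂ - (q ^ 4) • (z₂ * star z₂))
    (hsph₁ : z₁ * star z₁ + z₂ * star z₂ + z₃ * star z₃ + z₄ * star z₄ = 1) :
    z₁ * star z₁ + star z₃ * z₃ + q ^ 2 • (star z₄ * z₄) + q ^ 4 • (z₂ * star z₂) = 1 := by
  linear_combination (norm := module) hsph₁ + h33 + h22 + q ^ 2 • h44

theorem psi_col_one_orthogonal_col_zero (hq : q ≠ 0)
    (h24s : z₂ * star z₄ = q⁻¹ • (star z₄ * z₂))
    (h13s : z₁ * star z₃ - q⁻¹ • (star z₃ * z₁) = (q * (1 - q ^ 2)) • (star z₄ * z₂)) :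
    -(q • (z₁ * star z₃)) + star z₃ * z₁ + q ^ 2 • (star z₄ * z₂)
      - q ^ 5 • (z₂ * star z₄) = 0 := by
  linear_combination (norm := (match_scalars <;> field_simp <;> ring))
    (-q) • h13s - q ^ 5 • h24s

theorem psi_col_zero_orthogonal_col_one [StarModule ℝ R] (hq : q ≠ 0)
    (h24s : z₂ * star z₄ = q⁻¹ • (star z₄ * z₂))
    (h13s : z₁ * star z₃ - q⁻¹ • (star z₃ * z₁) = (q * (1 - q ^ 2)) • (star z₄ * z₂)) :
    -(q • (z₃ * star z₁)) + star z₁ * z₃ + q ^ 2 • (star z₂ * z₄)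
      - q ^ 5 • (z₄ * star z₂) = 0 := by
  simpa [star_smul] using congrArg star (psi_col_one_orthogonal_col_zero hq h24s h13s)

theorem psi_conjTranspose_mul_self [StarModule ℝ R] (hq : q ≠ 0)
    (h24s : z₂ * star z₄ = q⁻¹ • (star z₄ * z₂))
    (h13s : z₁ * star z₃ - q⁻¹ • (star z₃ * z₁) = (q * (1 - q ^ 2)) • (star z₄ * z₂))
    (h44 : star z₄ * z₄ = z₄ * star z₄)
    (h22 : star z₂ * z₂ - z₂ * star z₂ = (1 - q ^ 2) • (z₄ * star z₄))
    (h33 : star z₃ * z₃ - z₃ * star z₃ = star z₂ * z₂ - (q ^ 4) • (z₂ * star z₂))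
    (hsph₁ : z₁ * star z₁ + z₂ * star z₂ + z₃ * star z₃ + z₄ * star z₄ = 1)
    (hsph₂ : star z₁ * z₁ + (q ^ 6) • (star z₂ * z₂) + (q ^ 2) • (star z₃ * z₃)
        + (q ^ 8) • (star z₄ * z₄) = 1) :
    (psi q z₁ z₂ z₃ z₄)ᴴ * psi q z₁ z₂ z₃ z₄ = 1 := by
  ext i j
  fin_cases i <;> fin_cases j <;>
    simp [mul_apply, Fin.sum_univ_four, star_smul, smul_smul, ← sq, ← pow_add, ← pow_mul,
      ← sub_eq_add_neg, psi_col_zero_unit h44 h22 h33 hsph₂,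
      psi_col_zero_orthogonal_col_one hq h24s h13s, psi_col_one_orthogonal_col_zero hq h24s h13s,
      psi_col_one_unit h44 h22 h33 hsph₁]

end QuantumSphere

theorem stmt7_general (R : Type*) [Ring R] [StarRing R] [Algebra ℝ R] [StarModule ℝ R]
    (q : ℝ) (hq : 0 < q ∧ q < 1) (z₁ z₂ z₃ z₄ : R)
    (h24s : z₂ * star z₄ = q⁻¹ • (star z₄ * z₂))
    (h13s : z₁ * star z₃ - q⁻¹ • (star z₃ * z₁) = (q * (1 - q ^ 2)) • (star z₄ * z₂))
    (h44 : star z₄ * z₄ = z₄ * star z₄)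
    (h22 : star z₂ * z₂ - z₂ * star z₂ = (1 - q ^ 2) • (z₄ * star z₄))
    (h33 : star z₃ * z₃ - z₃ * star z₃ = star z₂ * z₂ - (q ^ 4) • (z₂ * star z₂))
    (hsph₁ : z₁ * star z₁ + z₂ * star z₂ + z₃ * star z₃ + z₄ * star z₄ = 1)
    (hsph₂ : star z₁ * z₁ + (q ^ 6) • (star z₂ * z₂) + (q ^ 2) • (star z₃ * z₃)
        + (q ^ 8) • (star z₄ * z₄) = 1)
    (Ψ : Matrix (Fin 4) (Fin 2) R)
    (hΨ : Ψ = !![-(q • star z₃), star z₁;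
                 z₁, z₃;
                 q • z₂, q • z₄;
                 -((q ^ 3) • star z₄), (q ^ 2) • star z₂]) :
    Ψᴴ * Ψ = 1
    ∧ (Ψ * Ψᴴ)ᴴ = Ψ * Ψᴴ
    ∧ (Ψ * Ψᴴ) * (Ψ * Ψᴴ) = Ψ * Ψᴴ := by
  have hunit : Ψᴴ * Ψ = 1 := by
    subst hΨ
    exact psi_conjTranspose_mul_self hq.1.ne' h24s h13s h44 h22 h33 hsph₁ hsph₂
  have hP := isStarProjection_mul_conjTranspose_of_conjTranspose_mul_self_eq_one hunit
  exact ⟨hunit, hP.isSelfAdjoint, hP.isIdempotentElem⟩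

/-- In `A(S⁷_q)` (any *-algebra with elements `z₁,…,z₄` satisfying its
defining relations), the 4×2 matrix `Ψ` with rows `(−qz₃*, z₁*)`, `(z₁, z₃)`,
`(qz₂, qz₄)`, `(−q³z₄*, q²z₂*)` satisfies `Ψ†Ψ = 1`; consequently `P := ΨΨ†`
satisfies `P = P*` and `P² = P`. -/
theorem stmt7 (R : Type*) [Ring R] [StarRing R] [Algebra ℝ R] [StarModule ℝ R]
    (q : ℝ) (hq : 0 < q ∧ q < 1) (z₁ z₂ z₃ z₄ : R)
    (h12 : z₁ * z₂ = q⁻¹ • (z₂ * z₁))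
    (h13 : z₁ * z₃ = q⁻¹ • (z₃ * z₁))
    (h14 : z₁ * z₄ = (q⁻¹ ^ 2) • (z₄ * z₁))
    (h24 : z₂ * z₄ = q⁻¹ • (z₄ * z₂))
    (h34 : z₃ * z₄ = q⁻¹ • (z₄ * z₃))
    (h24s : z₂ * star z₄ = q⁻¹ • (star z₄ * z₂))
    (h34s : z₃ * star z₄ = q⁻¹ • (star z₄ * z₃))
    (h14s : z₁ * star z₄ = (q⁻¹ ^ 2) • (star z₄ * z₁))
    (h23s : z₂ * star z₃ = (q⁻¹ ^ 2) • (star z₃ * z₂))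
    (h23 : z₂ * z₃ - (q ^ 2) • (z₃ * z₂) = (q * (1 - q ^ 2)) • (z₁ * z₄))
    (h12s : z₁ * star z₂ - q⁻¹ • (star z₂ * z₁) = (q - q⁻¹) • (star z₄ * z₃))
    (h13s : z₁ * star z₃ - q⁻¹ • (star z₃ * z₁) = (q * (1 - q ^ 2)) • (star z₄ * z₂))
    (h44 : star z₄ * z₄ = z₄ * star z₄)
    (h22 : star z₂ * z₂ - z₂ * star z₂ = (1 - q ^ 2) • (z₄ * star z₄))
    (h33 : star z₃ * z₃ - z₃ * star z₃ = star z₂ * z₂ - (q ^ 4) • (z₂ * star z₂))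
    (hsph₁ : z₁ * star z₁ + z₂ * star z₂ + z₃ * star z₃ + z₄ * star z₄ = 1)
    (hsph₂ : star z₁ * z₁ + (q ^ 6) • (star z₂ * z₂) + (q ^ 2) • (star z₃ * z₃)
        + (q ^ 8) • (star z₄ * z₄) = 1)
    (Ψ : Matrix (Fin 4) (Fin 2) R)
    (hΨ : Ψ = !![-(q • star z₃), star z₁;
                 z₁, z₃;
                 q • z₂, q • z₄;
                 -((q ^ 3) • star z₄), (q ^ 2) • star z₂]) :
    Ψᴴ * Ψ = 1
    ∧ (Ψ * Ψᴴ)ᴴ = Ψ * Ψᴴ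
    ∧ (Ψ * Ψᴴ) * (Ψ * Ψᴴ) = Ψ * Ψᴴ :=
  stmt7_general R q hq z₁ z₂ z₃ z₄ h24s h13s h44 h22 h33 hsph₁ hsph₂ Ψ hΨ
end

section
/- In A(S⁷_q), let x₀ := z₂z₂* + z₄z₄*, x₁ := q(z₁z₂* + z₃z₄*), x₂ := z₂z₃ − qz₁z₄. Then these elements satisfy: x₀x_i = q^{2i}x_ix₀ (i = 1,2), x₁x₂ = x₂x₁, x₁*x₂ = q⁴x₂x₁*, x_i*x_i − q⁴x_ix_i* = (1 − q^{2i})(q²x₀)^i, and x₀² + x₁x₁* + x₂x₂* = x₀, where x₀ = x₀*. -/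
/-!
Call a word in the generators normal if its letters occur in the order
`z₄, z₃, z₂, z₁, z₁*, z₂*, z₃*, z₄*` and it does not contain both `z₁` and `z₁*`. Each commutation
relation of `A(S⁷_q)`, solved for a product of two generators in the wrong order, rewrites that
product as a combination of normal words, and the two sphere relations do the same for `z₁ z₁*`
and `z₁* z₁`. Normal-ordering both sides of each identity reduces it to equalities between the
coefficients of the same normal words, which are rational functions of `q`.
-/

theorem mul_mul_eq_of_mul_eq {M : Type*} [Semigroup M] {a b c : M} (h : a * b = c) (d : M) :
    a * (b * d) = c * d := by
  rw [← mul_assoc, h]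

theorem eq_of_forall_mul_eq {M : Type*} [MulOneClass M] {a b : M} (h : ∀ t, a * t = b * t) :
    a = b := by
  simpa using h 1

section

variable {R : Type*} [Ring R] [StarRing R] [Algebra ℝ R]

structure SymplecticSphereRelations (q : ℝ) (z₁ z₂ z₃ z₄ : R) : Prop where
  ne_zero : q ≠ 0
  mul₁₂ : z₁ * z₂ = q⁻¹ • (z₂ * z₁)
  mul₁₃ : z₁ * z₃ = q⁻¹ • (z₃ * z₁)
  mul₁₄ : z₁ * z₄ = q⁻¹ ^ 2 • (z₄ * z₁)
  mul₂₄ : z₂ * z₄ = q⁻¹ • (z₄ * z₂)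
  mul₃₄ : z₃ * z₄ = q⁻¹ • (z₄ * z₃)
  mul_star₂₄ : z₂ * star z₄ = q⁻¹ • (star z₄ * z₂)
  mul_star₃₄ : z₃ * star z₄ = q⁻¹ • (star z₄ * z₃)
  mul_star₁₄ : z₁ * star z₄ = q⁻¹ ^ 2 • (star z₄ * z₁)
  mul_star₂₃ : z₂ * star z₃ = q⁻¹ ^ 2 • (star z₃ * z₂)
  qcomm₂₃ : z₂ * z₃ - q ^ 2 • (z₃ * z₂) = (q * (1 - q ^ 2)) • (z₁ * z₄)
  qcomm_star₁₂ : z₁ * star z₂ - q⁻¹ • (star z₂ * z₁) = (q - q⁻¹) • (star z₄ * z₃)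
  qcomm_star₁₃ : z₁ * star z₃ - q⁻¹ • (star z₃ * z₁) = (q * (1 - q ^ 2)) • (star z₄ * z₂)
  star_mul₄₄ : star z₄ * z₄ = z₄ * star z₄
  comm₂₂ : star z₂ * z₂ - z₂ * star z₂ = (1 - q ^ 2) • (z₄ * star z₄)
  comm₃₃ : star z₃ * z₃ - z₃ * star z₃ = star z₂ * z₂ - q ^ 4 • (z₂ * star z₂)
  sum_mul_star : z₁ * star z₁ + z₂ * star z₂ + z₃ * star z₃ + z₄ * star z₄ = 1
  sum_star_mul : star z₁ * z₁ + q ^ 6 • (star z₂ * z₂) + q ^ 2 • (star z₃ * z₃)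
      + q ^ 8 • (star z₄ * z₄) = 1

namespace SymplecticSphereRelations

variable {q : ℝ} {z₁ z₂ z₃ z₄ : R}

theorem mul₂₃ (h : SymplecticSphereRelations q z₁ z₂ z₃ z₄) :
    z₂ * z₃ = q ^ 2 • (z₃ * z₂) + (q * (1 - q ^ 2)) • (z₁ * z₄) :=
  sub_eq_iff_eq_add'.1 h.qcomm₂₃

theorem star_mul₄₂ (h : SymplecticSphereRelations q z₁ z₂ z₃ z₄) :
    star z₄ * z₂ = q • (z₂ * star z₄) := by
  rw [h.mul_star₂₄, smul_inv_smul₀ h.ne_zero]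

theorem star_mul₄₃ (h : SymplecticSphereRelations q z₁ z₂ z₃ z₄) :
    star z₄ * z₃ = q • (z₃ * star z₄) := by
  rw [h.mul_star₃₄, smul_inv_smul₀ h.ne_zero]

theorem star_mul₄₁ (h : SymplecticSphereRelations q z₁ z₂ z₃ z₄) :
    star z₄ * z₁ = q ^ 2 • (z₁ * star z₄) := by
  rw [h.mul_star₁₄, inv_pow, smul_inv_smul₀ (pow_ne_zero 2 h.ne_zero)]

theorem star_mul₃₂ (h : SymplecticSphereRelations q z₁ z₂ z₃ z₄) :
    star z₃ * z₂ = q ^ 2 • (z₂ * star z₃) := by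
  rw [h.mul_star₂₃, inv_pow, smul_inv_smul₀ (pow_ne_zero 2 h.ne_zero)]

theorem star_mul₂₁ (h : SymplecticSphereRelations q z₁ z₂ z₃ z₄) :
    star z₂ * z₁ = q • (z₁ * star z₂) + (q * (1 - q ^ 2)) • (z₃ * star z₄) := by
  have := h.ne_zero
  linear_combination (norm := match_scalars <;> field_simp <;> ring)
    (-q) • h.qcomm_star₁₂ + (1 - q ^ 2) • h.star_mul₄₃

theorem star_mul₃₁ (h : SymplecticSphereRelations q z₁ z₂ z₃ z₄) :
    star z₃ * z₁ = q • (z₁ * star z₃) - (q ^ 3 * (1 - q ^ 2)) • (z₂ * star z₄) := by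
  have := h.ne_zero
  linear_combination (norm := match_scalars <;> field_simp <;> ring)
    (-q) • h.qcomm_star₁₃ - (q ^ 2 * (1 - q ^ 2)) • h.star_mul₄₂

theorem star_mul₂₂ (h : SymplecticSphereRelations q z₁ z₂ z₃ z₄) :
    star z₂ * z₂ = z₂ * star z₂ + (1 - q ^ 2) • (z₄ * star z₄) :=
  sub_eq_iff_eq_add'.1 h.comm₂₂

theorem star_mul₃₃ (h : SymplecticSphereRelations q z₁ z₂ z₃ z₄) :
    star z₃ * z₃ = z₃ * star z₃ + (1 - q ^ 4) • (z₂ * star z₂) + (1 - q ^ 2) • (z₄ * star z₄) := by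
  linear_combination (norm := match_scalars <;> ring) h.comm₃₃ + h.comm₂₂

theorem star_mul₁₁ (h : SymplecticSphereRelations q z₁ z₂ z₃ z₄) :
    star z₁ * z₁ = 1 - q ^ 2 • (z₂ * star z₂) - q ^ 2 • (z₃ * star z₃)
      - (q ^ 2 - q ^ 4 + q ^ 6) • (z₄ * star z₄) := by
  linear_combination (norm := match_scalars <;> ring)
    h.sum_star_mul - q ^ 6 • h.star_mul₂₂ - q ^ 2 • h.star_mul₃₃ - q ^ 8 • h.star_mul₄₄

theorem mul_star₁₁ (h : SymplecticSphereRelations q z₁ z₂ z₃ z₄) :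
    z₁ * star z₁ = 1 - z₂ * star z₂ - z₃ * star z₃ - z₄ * star z₄ := by
  rw [← h.sum_mul_star]; abel

section Star

variable [StarModule ℝ R]

theorem star_mul_star₂₁ (h : SymplecticSphereRelations q z₁ z₂ z₃ z₄) :
    star z₂ * star z₁ = q⁻¹ • (star z₁ * star z₂) := by
  simpa using congrArg star h.mul₁₂

theorem star_mul_star₄₁ (h : SymplecticSphereRelations q z₁ z₂ z₃ z₄) :
    star z₄ * star z₁ = q⁻¹ ^ 2 • (star z₁ * star z₄) := by
  simpa using congrArg star h.mul₁₄

theorem star_mul_star₄₂ (h : SymplecticSphereRelations q z₁ z₂ z₃ z₄) :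
    star z₄ * star z₂ = q⁻¹ • (star z₂ * star z₄) := by
  simpa using congrArg star h.mul₂₄

theorem star_mul_star₄₃ (h : SymplecticSphereRelations q z₁ z₂ z₃ z₄) :
    star z₄ * star z₃ = q⁻¹ • (star z₃ * star z₄) := by
  simpa using congrArg star h.mul₃₄

theorem star_mul_star₃₂ (h : SymplecticSphereRelations q z₁ z₂ z₃ z₄) :
    star z₃ * star z₂ = q ^ 2 • (star z₂ * star z₃) + (q * (1 - q ^ 2)) • (star z₄ * star z₁) := by
  simpa using congrArg star h.mul₂₃

theorem star_mul₂₄ (h : SymplecticSphereRelations q z₁ z₂ z₃ z₄) :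
    star z₂ * z₄ = q • (z₄ * star z₂) := by
  simpa using congrArg star h.star_mul₄₂

theorem star_mul₃₄ (h : SymplecticSphereRelations q z₁ z₂ z₃ z₄) :
    star z₃ * z₄ = q • (z₄ * star z₃) := by
  simpa using congrArg star h.star_mul₄₃

theorem star_mul₂₃ (h : SymplecticSphereRelations q z₁ z₂ z₃ z₄) :
    star z₂ * z₃ = q ^ 2 • (z₃ * star z₂) := by
  simpa using congrArg star h.star_mul₃₂

theorem star_mul₁₂ (h : SymplecticSphereRelations q z₁ z₂ z₃ z₄) :
    star z₁ * z₂ = q • (z₂ * star z₁) + (q * (1 - q ^ 2)) • (z₄ * star z₃) := by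
  simpa using congrArg star h.star_mul₂₁

theorem star_mul₁₃ (h : SymplecticSphereRelations q z₁ z₂ z₃ z₄) :
    star z₁ * z₃ = q • (z₃ * star z₁) - (q ^ 3 * (1 - q ^ 2)) • (z₄ * star z₂) := by
  simpa using congrArg star h.star_mul₃₁

end Star
end SymplecticSphereRelations

end

set_option maxHeartbeats 400000 in
/-- In `A(S⁷_q)`, the elements `x₀ := z₂z₂* + z₄z₄*`,
`x₁ := q(z₁z₂* + z₃z₄*)`, `x₂ := z₂z₃ − qz₁z₄` satisfy `x₀ = x₀*`,
`x₀x_i = q^{2i}x_ix₀` (i = 1,2), `x₁x₂ = x₂x₁`, `x₁*x₂ = q⁴x₂x₁*`,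
`x_i*x_i − q⁴x_ix_i* = (1 − q^{2i})(q²x₀)^i`, and `x₀² + x₁x₁* + x₂x₂* = x₀`. -/
theorem stmt8 (R : Type*) [Ring R] [StarRing R] [Algebra ℝ R] [StarModule ℝ R]
    (q : ℝ) (hq : 0 < q ∧ q < 1) (z₁ z₂ z₃ z₄ : R)
    (h12 : z₁ * z₂ = q⁻¹ • (z₂ * z₁))
    (h13 : z₁ * z₃ = q⁻¹ • (z₃ * z₁))
    (h14 : z₁ * z₄ = (q⁻¹ ^ 2) • (z₄ * z₁))
    (h24 : z₂ * z₄ = q⁻¹ • (z₄ * z₂))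
    (h34 : z₃ * z₄ = q⁻¹ • (z₄ * z₃))
    (h24s : z₂ * star z₄ = q⁻¹ • (star z₄ * z₂))
    (h34s : z₃ * star z₄ = q⁻¹ • (star z₄ * z₃))
    (h14s : z₁ * star z₄ = (q⁻¹ ^ 2) • (star z₄ * z₁))
    (h23s : z₂ * star z₃ = (q⁻¹ ^ 2) • (star z₃ * z₂))
    (h23 : z₂ * z₃ - (q ^ 2) • (z₃ * z₂) = (q * (1 - q ^ 2)) • (z₁ * z₄))
    (h12s : z₁ * star z₂ - q⁻¹ • (star z₂ * z₁) = (q - q⁻¹) • (star z₄ * z₃))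
    (h13s : z₁ * star z₃ - q⁻¹ • (star z₃ * z₁) = (q * (1 - q ^ 2)) • (star z₄ * z₂))
    (h44 : star z₄ * z₄ = z₄ * star z₄)
    (h22 : star z₂ * z₂ - z₂ * star z₂ = (1 - q ^ 2) • (z₄ * star z₄))
    (h33 : star z₃ * z₃ - z₃ * star z₃ = star z₂ * z₂ - (q ^ 4) • (z₂ * star z₂))
    (hsph₁ : z₁ * star z₁ + z₂ * star z₂ + z₃ * star z₃ + z₄ * star z₄ = 1)
    (hsph₂ : star z₁ * z₁ + (q ^ 6) • (star z₂ * z₂) + (q ^ 2) • (star z₃ * z₃)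
        + (q ^ 8) • (star z₄ * z₄) = 1)
    (x₀ x₁ x₂ : R)
    (hx₀ : x₀ = z₂ * star z₂ + z₄ * star z₄)
    (hx₁ : x₁ = q • (z₁ * star z₂ + z₃ * star z₄))
    (hx₂ : x₂ = z₂ * z₃ - q • (z₁ * z₄)) :
    star x₀ = x₀
    ∧ x₀ * x₁ = (q ^ 2) • (x₁ * x₀)
    ∧ x₀ * x₂ = (q ^ 4) • (x₂ * x₀)
    ∧ x₁ * x₂ = x₂ * x₁
    ∧ star x₁ * x₂ = (q ^ 4) • (x₂ * star x₁)
    ∧ star x₁ * x₁ - (q ^ 4) • (x₁ * star x₁) = (1 - q ^ 2) • ((q ^ 2) • x₀)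
    ∧ star x₂ * x₂ - (q ^ 4) • (x₂ * star x₂) = (1 - q ^ 4) • (((q ^ 2) • x₀) ^ 2)
    ∧ x₀ ^ 2 + x₁ * star x₁ + x₂ * star x₂ = x₀ := by
  have hq₀ : q ≠ 0 := hq.1.ne'
  have hS : SymplecticSphereRelations q z₁ z₂ z₃ z₄ := ⟨hq₀, h12, h13, h14, h24, h34, h24s, h34s,
    h14s, h23s, h23, h12s, h13s, h44, h22, h33, hsph₁, hsph₂⟩
  subst hx₀ hx₁ hx₂
  -- Against an arbitrary right factor `t` every word ends in `* t`, so each rule is needed only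
  -- in the shifted form `a * (b * t) = c * t`.
  refine ⟨?_, ?_, ?_, ?_, ?_, ?_, ?_, ?_⟩ <;> refine eq_of_forall_mul_eq fun t => ?_ <;>
  simp only [star_add, star_sub, star_mul, star_smul, star_star, star_trivial, pow_two, mul_add,
    add_mul, mul_sub, sub_mul, smul_add, smul_sub, smul_smul, smul_mul_assoc, mul_smul_comm,
    mul_assoc, one_mul,
    mul_mul_eq_of_mul_eq hS.mul₁₂, mul_mul_eq_of_mul_eq hS.mul₁₃, mul_mul_eq_of_mul_eq hS.mul₁₄,
    mul_mul_eq_of_mul_eq hS.mul₂₃, mul_mul_eq_of_mul_eq hS.mul₂₄, mul_mul_eq_of_mul_eq hS.mul₃₄,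
    mul_mul_eq_of_mul_eq hS.star_mul_star₂₁, mul_mul_eq_of_mul_eq hS.star_mul_star₄₁,
    mul_mul_eq_of_mul_eq hS.star_mul_star₃₂, mul_mul_eq_of_mul_eq hS.star_mul_star₄₂,
    mul_mul_eq_of_mul_eq hS.star_mul_star₄₃, mul_mul_eq_of_mul_eq hS.star_mul₂₂,
    mul_mul_eq_of_mul_eq hS.star_mul₂₃, mul_mul_eq_of_mul_eq hS.star_mul₂₄,
    mul_mul_eq_of_mul_eq hS.star_mul₃₂, mul_mul_eq_of_mul_eq hS.star_mul₃₃,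
    mul_mul_eq_of_mul_eq hS.star_mul₃₄, mul_mul_eq_of_mul_eq hS.star_mul₄₂,
    mul_mul_eq_of_mul_eq hS.star_mul₄₃, mul_mul_eq_of_mul_eq hS.star_mul₄₄,
    mul_mul_eq_of_mul_eq hS.star_mul₁₂, mul_mul_eq_of_mul_eq hS.star_mul₁₃,
    mul_mul_eq_of_mul_eq hS.star_mul₂₁, mul_mul_eq_of_mul_eq hS.star_mul₃₁,
    mul_mul_eq_of_mul_eq hS.star_mul₄₁, mul_mul_eq_of_mul_eq hS.star_mul₁₁,
    mul_mul_eq_of_mul_eq hS.mul_star₁₁] <;>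
  match_scalars <;> field_simp <;> ring
end

section
/- Let φ: A → ℂ be linear with φ(ab) = φ(b κ(a)) for an automorphism κ of A admitting a square root κ^{1/2} (κ = κ^{1/2} ∘ κ^{1/2}) which commutes with the involution in the sense κ^{1/2}(a)* = κ^{-1/2}(a*). Define on A² the inner product ⟨v,w⟩ = φ(v₁*w₁) + φ(v₂*w₂) and the antilinear map T(v₁,v₂) := (κ^{1/2}(v₂*), −κ^{1/2}(v₁*)). Then T² = −1 and ⟨Tv, Tw⟩ = ⟨w, v⟩ for all v, w ∈ A², i.e. T is an antiunitary with T² = −1. -/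
/-- Let `φ : A → ℂ` be linear with `φ(ab) = φ(b κ(a))` for an
automorphism `κ = κ^{1/2} ∘ κ^{1/2}`, where `κ^{1/2}` satisfies
`κ^{1/2}(κ^{1/2}(a*)*) = a` (i.e. `κ^{1/2} ∘ * ∘ κ^{1/2} ∘ * = id`) and
`φ ∘ κ^{1/2} = φ`. With `⟨v,w⟩ := φ(v₁*w₁) + φ(v₂*w₂)` on `A²` and
`T(v₁,v₂) := (κ^{1/2}(v₂*), −κ^{1/2}(v₁*))`, one has `T² = −1` and
`⟨Tv, Tw⟩ = ⟨w, v⟩`. -/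
theorem stmt11
    (A : Type*) [Ring A] [StarRing A] [Algebra ℂ A] [StarModule ℂ A]
    (φ : A →ₗ[ℂ] ℂ) (κhalf : A ≃ₐ[ℂ] A)
    (hmod : ∀ a b : A, φ (a * b) = φ (b * κhalf (κhalf a)))
    (hsq : ∀ a : A, κhalf (star (κhalf (star a))) = a)
    (hinv : ∀ a : A, φ (κhalf a) = φ a)
    (ip : (A × A) → (A × A) → ℂ)
    (hip : ∀ v w : A × A, ip v w = φ (star v.1 * w.1) + φ (star v.2 * w.2))
    (T : A × A → A × A)
    (hT : ∀ v : A × A, T v = (κhalf (star v.2), -κhalf (star v.1))) :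
    (∀ v : A × A, T (T v) = -v) ∧ (∀ v w : A × A, ip (T v) (T w) = ip w v) := by
  -- key: star (κhalf (star a)) = κhalf.symm a
  have hstar : ∀ a : A, star (κhalf (star a)) = κhalf.symm a := by
    intro a
    have := hsq a
    calc star (κhalf (star a)) = κhalf.symm (κhalf (star (κhalf (star a)))) := by
          rw [κhalf.symm_apply_apply]
      _ = κhalf.symm a := by rw [this]
  have key : ∀ a b : A,
      φ (star (κhalf (star a)) * κhalf (star b)) = φ (star b * a) := by
    intro a b
    rw [hstar]
    have h1 : φ (κhalf.symm a * κhalf (star b))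
        = φ (κhalf (κhalf.symm a * κhalf (star b))) := (hinv _).symm
    rw [h1, map_mul, κhalf.apply_symm_apply, ← hmod]
  constructor
  · intro v
    rw [hT, hT]
    simp only [star_neg, map_neg, hsq]
    ext <;> simp
  · intro v w
    rw [hip, hip, hT, hT]
    simp only [star_neg, neg_mul, mul_neg, neg_neg]
    rw [key, key]
    ring
end
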